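/- Let φ be a 3-SAT formula with variables x_1, …, x_n and m clauses, each containing exactly 3 literals corresponding to pairwise distinct variables; upper indices j range over {1, …, m} cyclically (j + 1 denotes 1 when j = m). Consider the allocation instance with items {z, z', z''} ∪ {v_i^j, ℓ_i^j, ℓ̄_i^j : 1 ≤ i ≤ n, 1 ≤ j ≤ m} and the following agents: agents b, b', b'', each with preference graph the single directed path (z, z', z''); variable agents a_i^j (1 ≤ i ≤ n, 1 ≤ j ≤ m), each with preference graph consisting of the two directed paths (z, v_i^{j+1}, ℓ_i^j) and (v_i^j, ℓ̄_i^j); and for each clause j, say (u_p ∨ u_q ∨ u_r), a clause agent c_j with preference graph the directed path (ℓ̃_p^j, ℓ̃_q^j, ℓ̃_r^j), where ℓ̃_s^j = ℓ_s^j if u_s is the positive literal x_s and ℓ̃_s^j = ℓ̄_s^j if u_s is the negative literal ¬x_s. Then φ is satisfiable if and only if there exists an allocation π with δ_π(i) ≤ 2 for every agent i. -/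

import Mathlib

/-- Item `u` dominates item `v`: `u = v` or there is a directed path from `u` to `v`
along the arcs in `A`. -/
def Dominates {α : Type*} (A : Set (α × α)) (u v : α) : Prop :=
  Relation.ReflTransGen (fun a b => (a, b) ∈ A) u v

/-- The dissatisfaction of an agent with approved item set `Vi`, arc set `A`,
receiving the set of items `P`. -/
noncomputable def dissat {α : Type*} (Vi : Set α) (A : Set (α × α)) (P : Set α) : ℕ :=
  Set.ncard {v | v ∈ Vi ∧ ¬ ∃ u, u ∈ P ∧ u ∈ Vi ∧ Dominates A u v}

/-- The satisfaction of an agent with approved item set `Vi`, arc set `A`,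
receiving the set of items `P`. -/
noncomputable def satis {α : Type*} (Vi : Set α) (A : Set (α × α)) (P : Set α) : ℕ :=
  Set.ncard {v | v ∈ Vi ∧ ∃ u, u ∈ P ∧ u ∈ Vi ∧ Dominates A u v}

/-- An allocation assigns pairwise disjoint sets of items to the agents. -/
def IsAllocation {ι α : Type*} (π : ι → Set α) : Prop :=
  Pairwise fun i j => Disjoint (π i) (π j)

/-- The arc set is acyclic (directed acyclic graph). -/
def Acyclic {α : Type*} (A : Set (α × α)) : Prop :=
  ∀ v : α, ¬ Relation.TransGen (fun a b => (a, b) ∈ A) v v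

/-- Items of the reduction: `z, z', z''` (indexed by `Fin 3`), the items `v_i^j`,
and the items `ℓ_i^j` (sign `true`) and `ℓ̄_i^j` (sign `false`). -/
abbrev S17Itm (n m : ℕ) : Type := Fin 3 ⊕ (Fin n × Fin m) ⊕ (Fin n × Fin m × Bool)

/-- Agents: `b, b', b''` (indexed by `Fin 3`), the variable agents `a_i^j`,
and the clause agents `c_j`. -/
abbrev S17Agt (n m : ℕ) : Type := Fin 3 ⊕ (Fin n × Fin m) ⊕ Fin m

/-- Vertex sets of the preference graphs.  Clause `j` is given by its three literals
`cl j 0, cl j 1, cl j 2`, a literal being a pair (variable index, sign); upper indices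
are cyclic (`j + 1` is the cyclic successor `finRotate m j` in `Fin m`). -/
def s17Vi (n m : ℕ) (cl : Fin m → Fin 3 → Fin n × Bool) :
    S17Agt n m → Set (S17Itm n m)
  | .inl _ => {v | v = .inl 0 ∨ v = .inl 1 ∨ v = .inl 2}
  | .inr (.inl (i, j)) => {v | v = .inl 0 ∨ v = .inr (.inl (i, finRotate m j)) ∨
      v = .inr (.inr (i, j, true)) ∨ v = .inr (.inl (i, j)) ∨
      v = .inr (.inr (i, j, false))}
  | .inr (.inr j) => {v | ∃ t : Fin 3, v = .inr (.inr ((cl j t).1, j, (cl j t).2))}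

/-- Arc sets of the preference graphs: agent `b` (and `b'`, `b''`) has the path
`(z, z', z'')`; the variable agent `a_i^j` has the two paths `(z, v_i^{j+1}, ℓ_i^j)` and
`(v_i^j, ℓ̄_i^j)`; the clause agent `c_j` has the path `(ℓ̃_p^j, ℓ̃_q^j, ℓ̃_r^j)`. -/
def s17A (n m : ℕ) (cl : Fin m → Fin 3 → Fin n × Bool) :
    S17Agt n m → Set (S17Itm n m × S17Itm n m)
  | .inl _ => {p | p = (.inl 0, .inl 1) ∨ p = (.inl 1, .inl 2)}
  | .inr (.inl (i, j)) => {p | p = (.inl 0, .inr (.inl (i, finRotate m j))) ∨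
      p = (.inr (.inl (i, finRotate m j)), .inr (.inr (i, j, true))) ∨
      p = (.inr (.inl (i, j)), .inr (.inr (i, j, false)))}
  | .inr (.inr j) =>
      {p | p = (.inr (.inr ((cl j 0).1, j, (cl j 0).2)),
                .inr (.inr ((cl j 1).1, j, (cl j 1).2))) ∨
           p = (.inr (.inr ((cl j 1).1, j, (cl j 1).2)),
                .inr (.inr ((cl j 2).1, j, (cl j 2).2)))}

/-! ### Auxiliary lemmas -/

lemma S17ncard_le_two {α : Type*} {S : Set α} {a b : α} (h : S ⊆ {a, b}) : S.ncard ≤ 2 := by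
  have h1 := Set.ncard_le_ncard h (Set.toFinite _)
  have h2 : ({a, b} : Set α).ncard ≤ 2 :=
    le_trans (Set.ncard_insert_le a {b}) (by simp)
  omega

lemma S17three_le_ncard {α : Type*} {S : Set α} (hS : S.Finite) {x y w : α}
    (hx : x ∈ S) (hy : y ∈ S) (hw : w ∈ S) (hxy : x ≠ y) (hxw : x ≠ w) (hyw : y ≠ w) :
    3 ≤ S.ncard := by
  have hsub : ({x, y, w} : Set α) ⊆ S := by
    intro v hv; rcases hv with rfl | rfl | rfl <;> assumption
  have h3 : ({x, y, w} : Set α).ncard = 3 := by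
    rw [Set.ncard_insert_of_notMem (by simp [hxy, hxw]) (Set.toFinite _), Set.ncard_pair hyw]
  rw [← h3]
  exact Set.ncard_le_ncard hsub hS

lemma S17tripleMem {α : Type*} {x y w a b c : α}
    (ha : a = x ∨ a = y ∨ a = w) (hb : b = x ∨ b = y ∨ b = w) (hc : c = x ∨ c = y ∨ c = w)
    (hab : a ≠ b) (hac : a ≠ c) (hbc : b ≠ c) : x = a ∨ x = b ∨ x = c := by
  rcases ha with rfl | rfl | rfl <;> rcases hb with rfl | rfl | rfl <;>
    rcases hc with rfl | rfl | rfl <;> simp_all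

lemma S17rot (m : ℕ) [NeZero m] (x : Fin m) : finRotate m x = x + 1 := by
  cases m with
  | zero => exact x.elim0
  | succ m' => exact finRotate_succ_apply x

lemma S17succ_ne (m : ℕ) (hm : 2 ≤ m) (x : Fin m) :
    haveI : NeZero m := ⟨by omega⟩
    x + 1 ≠ x := by
  obtain ⟨m', rfl⟩ : ∃ k, m = k + 2 := ⟨m - 2, by omega⟩
  intro h
  by_cases hx : x = Fin.last (m' + 1)
  · subst hx
    rw [Fin.last_add_one] at h
    have := congrArg Fin.val h
    simp at this
  · have hlt : x < Fin.last (m' + 1) := lt_of_le_of_ne (Fin.le_last x) hx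
    have h2 := congrArg Fin.val h
    rw [Fin.val_add_one_of_lt hlt] at h2
    omega

lemma S17domA_inv {n m : ℕ} (cl : Fin m → Fin 3 → Fin n × Bool) (i : Fin n) (j : Fin m)
    {u x : S17Itm n m}
    (h : Dominates (s17A n m cl (Sum.inr (Sum.inl (i, j)))) u x) :
    u = x ∨ u = Sum.inl 0 ∨
    (u = Sum.inr (Sum.inl (i, finRotate m j)) ∧
      (x = Sum.inr (Sum.inr (i, j, true)) ∨
       (x = Sum.inr (Sum.inr (i, j, false)) ∧ finRotate m j = j))) ∨
    (u = Sum.inr (Sum.inl (i, j)) ∧ x = Sum.inr (Sum.inr (i, j, false))) := by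
  rcases h.cases_head with rfl | ⟨w, hw, h⟩
  · exact Or.inl rfl
  simp only [s17A, Set.mem_setOf_eq, Prod.mk.injEq] at hw
  rcases hw with ⟨rfl, rfl⟩ | ⟨rfl, rfl⟩ | ⟨rfl, rfl⟩
  · exact Or.inr (Or.inl rfl)
  · rcases h.cases_head with rfl | ⟨w2, hw2, h2⟩
    · exact Or.inr (Or.inr (Or.inl ⟨rfl, Or.inl rfl⟩))
    · simp only [s17A, Set.mem_setOf_eq, Prod.mk.injEq] at hw2
      rcases hw2 with ⟨h', _⟩ | ⟨h', _⟩ | ⟨h', _⟩ <;> simp at h'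
  · rcases h.cases_head with rfl | ⟨w2, hw2, h2⟩
    · exact Or.inr (Or.inr (Or.inr ⟨rfl, rfl⟩))
    · simp only [s17A, Set.mem_setOf_eq, Prod.mk.injEq] at hw2
      rcases hw2 with ⟨h', _⟩ | ⟨h', _⟩ | ⟨h', _⟩ <;> simp at h'

/-- The allocation built from a satisfying assignment. -/
def S17fwd {n m : ℕ} (cl : Fin m → Fin 3 → Fin n × Bool) (β : Fin n → Bool)
    (T : Fin m → Fin 3) : S17Agt n m → Set (S17Itm n m)
  | .inl k => {.inl k}
  | .inr (.inl (i, j)) =>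
      if β i = true then {.inr (.inl (i, finRotate m j)), .inr (.inr (i, j, false))}
      else {.inr (.inl (i, j)), .inr (.inr (i, j, true))}
  | .inr (.inr j) => {.inr (.inr ((cl j (T j)).1, j, (cl j (T j)).2))}

lemma S17fwd_alloc {n m : ℕ} (cl : Fin m → Fin 3 → Fin n × Bool) (β : Fin n → Bool)
    (T : Fin m → Fin 3) (hT : ∀ j, β (cl j (T j)).1 = (cl j (T j)).2) :
    IsAllocation (S17fwd cl β T) := by
  intro a a' hne
  rw [Set.disjoint_left]
  intro x hx hx'
  rcases a with k | ⟨i, j⟩ | j <;> rcases a' with k' | ⟨i', j'⟩ | j'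
  · -- b vs b
    simp only [S17fwd, Set.mem_singleton_iff] at hx hx'
    subst hx; exact hne (by simp_all)
  · -- b vs a
    by_cases hb : β i' = true <;> simp only [S17fwd, hb, if_true, if_false,
      Set.mem_singleton_iff, Set.mem_insert_iff] at hx hx' <;> simp_all
  · -- b vs c
    simp only [S17fwd, Set.mem_singleton_iff] at hx hx'; simp_all
  · -- a vs b
    by_cases hb : β i = true <;> simp only [S17fwd, hb, if_true, if_false,
      Set.mem_singleton_iff, Set.mem_insert_iff] at hx hx' <;> simp_all
  · -- a vs a
    by_cases hb : β i = true <;> by_cases hb' : β i' = true <;>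
      simp only [S17fwd, hb, hb', if_true, if_false, Set.mem_insert_iff,
        Set.mem_singleton_iff] at hx hx' <;>
      rcases hx with rfl | rfl <;> rcases hx' with h | h <;>
      simp at h <;>
      first
        | (obtain ⟨rfl, h2⟩ := h;
           first
             | exact hb' hb
             | exact hb hb'
             | exact hne (by simp [h2]))
        | simp_all
  · -- a vs c
    by_cases hb : β i = true <;>
      simp only [S17fwd, hb, if_true, if_false, Set.mem_insert_iff,
        Set.mem_singleton_iff] at hx hx' <;>
      rcases hx with rfl | rfl <;>
      simp at hx' <;>
      (try (obtain ⟨rfl, rfl, h2⟩ := hx'; rw [hT] at hb; simp_all))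
  · -- c vs b
    simp only [S17fwd, Set.mem_singleton_iff] at hx hx'; simp_all
  · -- c vs a
    by_cases hb : β i' = true <;>
      simp only [S17fwd, hb, if_true, if_false, Set.mem_insert_iff,
        Set.mem_singleton_iff] at hx hx' <;>
      subst hx <;>
      simp at hx' <;>
      (try (obtain ⟨rfl, rfl, h2⟩ := hx'; rw [hT] at hb; simp_all))
  · -- c vs c
    simp only [S17fwd, Set.mem_singleton_iff] at hx hx'
    subst hx
    simp only [Sum.inr.injEq, Prod.mk.injEq] at hx'
    exact hne (by simp [hx'.2.1])

lemma S17fwd_dissat {n m : ℕ} (cl : Fin m → Fin 3 → Fin n × Bool) (β : Fin n → Bool)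
    (T : Fin m → Fin 3) (a : S17Agt n m) :
    dissat (s17Vi n m cl a) (s17A n m cl a) (S17fwd cl β T a) ≤ 2 := by
  have h3 : ∀ t : Fin 3, t = 0 ∨ t = 1 ∨ t = 2 := by decide
  unfold dissat
  rcases a with k | ⟨i, j⟩ | j
  · -- b agents
    rcases h3 k with rfl | rfl | rfl
    · apply S17ncard_le_two (a := (Sum.inl 0 : S17Itm n m)) (b := Sum.inl 1)
      rintro v ⟨hVi, hnc⟩
      exfalso; apply hnc
      rcases hVi with rfl | rfl | rfl
      · exact ⟨Sum.inl 0, rfl, Or.inl rfl, Relation.ReflTransGen.refl⟩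
      · exact ⟨Sum.inl 0, rfl, Or.inl rfl,
          Relation.ReflTransGen.single (by simp [s17A])⟩
      · exact ⟨Sum.inl 0, rfl, Or.inl rfl,
          Relation.ReflTransGen.head (b := Sum.inl 1) (by simp [s17A])
            (Relation.ReflTransGen.single (by simp [s17A]))⟩
    · apply S17ncard_le_two (a := (Sum.inl 0 : S17Itm n m)) (b := Sum.inl 1)
      rintro v ⟨hVi, hnc⟩
      rcases hVi with rfl | rfl | rfl
      · exact Or.inl rfl
      · exact Or.inr rfl
      · exfalso; apply hnc
        exact ⟨Sum.inl 1, rfl, Or.inr (Or.inl rfl),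
          Relation.ReflTransGen.single (by simp [s17A])⟩
    · apply S17ncard_le_two (a := (Sum.inl 0 : S17Itm n m)) (b := Sum.inl 1)
      rintro v ⟨hVi, hnc⟩
      rcases hVi with rfl | rfl | rfl
      · exact Or.inl rfl
      · exact Or.inr rfl
      · exfalso; apply hnc
        exact ⟨Sum.inl 2, rfl, Or.inr (Or.inr rfl), Relation.ReflTransGen.refl⟩
  · -- variable agents
    by_cases hb : β i = true
    · apply S17ncard_le_two (a := (Sum.inl 0 : S17Itm n m)) (b := Sum.inr (Sum.inl (i, j)))
      rintro v ⟨hVi, hnc⟩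
      rcases hVi with rfl | rfl | rfl | rfl | rfl
      · exact Or.inl rfl
      · exfalso; apply hnc
        exact ⟨Sum.inr (Sum.inl (i, finRotate m j)), by simp [S17fwd, hb],
          Or.inr (Or.inl rfl), Relation.ReflTransGen.refl⟩
      · exfalso; apply hnc
        exact ⟨Sum.inr (Sum.inl (i, finRotate m j)), by simp [S17fwd, hb],
          Or.inr (Or.inl rfl), Relation.ReflTransGen.single (by simp [s17A])⟩
      · exact Or.inr rfl
      · exfalso; apply hnc
        exact ⟨Sum.inr (Sum.inr (i, j, false)), by simp [S17fwd, hb],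
          Or.inr (Or.inr (Or.inr (Or.inr rfl))), Relation.ReflTransGen.refl⟩
    · apply S17ncard_le_two (a := (Sum.inl 0 : S17Itm n m))
        (b := Sum.inr (Sum.inl (i, finRotate m j)))
      rintro v ⟨hVi, hnc⟩
      rcases hVi with rfl | rfl | rfl | rfl | rfl
      · exact Or.inl rfl
      · exact Or.inr rfl
      · exfalso; apply hnc
        exact ⟨Sum.inr (Sum.inr (i, j, true)), by simp [S17fwd, hb],
          Or.inr (Or.inr (Or.inl rfl)), Relation.ReflTransGen.refl⟩
      · exfalso; apply hnc
        exact ⟨Sum.inr (Sum.inl (i, j)), by simp [S17fwd, hb],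
          Or.inr (Or.inr (Or.inr (Or.inl rfl))), Relation.ReflTransGen.refl⟩
      · exfalso; apply hnc
        exact ⟨Sum.inr (Sum.inl (i, j)), by simp [S17fwd, hb],
          Or.inr (Or.inr (Or.inr (Or.inl rfl))),
          Relation.ReflTransGen.single (by simp [s17A])⟩
  · -- clause agents
    rcases h3 (T j) with hT3 | hT3 <;> [skip; rcases hT3 with hT3 | hT3] <;>
    [ apply S17ncard_le_two (a := (Sum.inr (Sum.inr ((cl j 1).1, j, (cl j 1).2)) : S17Itm n m))
        (b := Sum.inr (Sum.inr ((cl j 2).1, j, (cl j 2).2)));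
      apply S17ncard_le_two (a := (Sum.inr (Sum.inr ((cl j 0).1, j, (cl j 0).2)) : S17Itm n m))
        (b := Sum.inr (Sum.inr ((cl j 2).1, j, (cl j 2).2)));
      apply S17ncard_le_two (a := (Sum.inr (Sum.inr ((cl j 0).1, j, (cl j 0).2)) : S17Itm n m))
        (b := Sum.inr (Sum.inr ((cl j 1).1, j, (cl j 1).2)))] <;>
    · rintro v ⟨⟨t, rfl⟩, hnc⟩
      rcases h3 t with rfl | rfl | rfl <;>
        first
          | exact Or.inl rfl
          | exact Or.inr rfl
          | (exfalso; apply hnc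
             exact ⟨Sum.inr (Sum.inr ((cl j (T j)).1, j, (cl j (T j)).2)), rfl, ⟨T j, rfl⟩,
               by rw [hT3]; exact Relation.ReflTransGen.refl⟩)

open Fin.NatCast Fin.CommRing in
lemma S17cycle {n m : ℕ} (hm : 2 ≤ m) (π : S17Agt n m → Set (S17Itm n m))
    (hal : IsAllocation π) (i : Fin n) (j j' : Fin m)
    (hF1 : ∀ k : Fin m, Sum.inr (Sum.inl (i, k)) ∈ π (Sum.inr (Sum.inl (i, k))) ∨
        Sum.inr (Sum.inl (i, finRotate m k)) ∈ π (Sum.inr (Sum.inl (i, k))))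
    (hstart : Sum.inr (Sum.inl (i, finRotate m j')) ∈ π (Sum.inr (Sum.inl (i, j'))))
    (hend : Sum.inr (Sum.inl (i, j)) ∈ π (Sum.inr (Sum.inl (i, j)))) : False := by
  obtain ⟨m', rfl⟩ : ∃ k, m = k + 2 := ⟨m - 2, by omega⟩
  simp only [finRotate_succ_apply] at hF1 hstart
  have key : ∀ N : ℕ,
      Sum.inr (Sum.inl (i, j' + (N : Fin (m' + 2)) + 1)) ∈
        π (Sum.inr (Sum.inl (i, j' + (N : Fin (m' + 2))))) := by
    intro N
    induction N with
    | zero => simpa using hstart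
    | succ N ih =>
      have hne : (Sum.inr (Sum.inl (i, j' + (N : Fin (m' + 2)))) : S17Agt n (m' + 2)) ≠
          Sum.inr (Sum.inl (i, j' + (N : Fin (m' + 2)) + 1)) := by
        simp only [ne_eq, Sum.inr.injEq, Sum.inl.injEq, Prod.mk.injEq, true_and]
        intro h
        exact S17succ_ne _ (by omega) _ h.symm
      have hnot : (Sum.inr (Sum.inl (i, j' + (N : Fin (m' + 2)) + 1)) : S17Itm n (m' + 2)) ∉
          π (Sum.inr (Sum.inl (i, j' + (N : Fin (m' + 2)) + 1))) :=
        fun hmem => Set.disjoint_left.mp (hal hne) ih hmem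
      have hcast : (j' + ((N + 1 : ℕ) : Fin (m' + 2))) = j' + (N : Fin (m' + 2)) + 1 := by
        push_cast; ring
      rw [hcast]
      rcases hF1 (j' + (N : Fin (m' + 2)) + 1) with h | h
      · exact absurd h hnot
      · exact h
  have hfin := key ((j - 1 - j') : Fin (m' + 2)).val
  rw [Fin.cast_val_eq_self] at hfin
  have e1 : j' + (j - 1 - j') = j - 1 := by ring
  have e2 : j - 1 + 1 = j := by ring
  rw [e1, e2] at hfin
  have hne2 : (Sum.inr (Sum.inl (i, j - 1)) : S17Agt n (m' + 2)) ≠ Sum.inr (Sum.inl (i, j)) := by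
    simp only [ne_eq, Sum.inr.injEq, Sum.inl.injEq, Prod.mk.injEq, true_and]
    intro h
    have h2 := S17succ_ne (m' + 2) (by omega) (j - 1)
    rw [e2] at h2
    exact h2 (by rw [h])
  exact Set.disjoint_left.mp (hal hne2) hfin hend

theorem stmt17 (n m : ℕ) (cl : Fin m → Fin 3 → Fin n × Bool)
    (hdist : ∀ j, Function.Injective fun t : Fin 3 => (cl j t).1) :
    (∃ β : Fin n → Bool, ∀ j : Fin m, ∃ t : Fin 3, β (cl j t).1 = (cl j t).2) ↔
    (∃ π : S17Agt n m → Set (S17Itm n m), IsAllocation π ∧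
      ∀ a, dissat (s17Vi n m cl a) (s17A n m cl a) (π a) ≤ 2) := by
  constructor
  · rintro ⟨β, hβ⟩
    choose T hT using hβ
    exact ⟨S17fwd cl β T, S17fwd_alloc cl β T hT, S17fwd_dissat cl β T⟩
  · rintro ⟨π, hal, hd⟩
    classical
    -- each b-agent owns one of z, z', z''
    have hbuse : ∀ k : Fin 3, ∃ u, u ∈ π (Sum.inl k) ∧
        ((u : S17Itm n m) = Sum.inl 0 ∨ u = Sum.inl 1 ∨ u = Sum.inl 2) := by
      intro k
      by_contra hno
      have hdk := hd (Sum.inl k)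
      unfold dissat at hdk
      refine absurd hdk (not_le.mpr (lt_of_lt_of_le (by norm_num)
        (S17three_le_ncard (Set.toFinite _) (x := (Sum.inl 0 : S17Itm n m))
          (y := Sum.inl 1) (w := Sum.inl 2) ?_ ?_ ?_ (by simp) (by simp) (by simp)))) <;>
      · refine ⟨by simp [s17Vi], ?_⟩
        rintro ⟨u, hu, hVi, -⟩
        exact hno ⟨u, hu, by simpa [s17Vi] using hVi⟩
    obtain ⟨u0, hu0, hm0⟩ := hbuse 0
    obtain ⟨u1, hu1, hm1⟩ := hbuse 1
    obtain ⟨u2, hu2, hm2⟩ := hbuse 2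
    have hd01 : u0 ≠ u1 := fun h => Set.disjoint_left.mp
      (hal (by simp : (Sum.inl 0 : S17Agt n m) ≠ Sum.inl 1)) hu0 (by rw [h]; exact hu1)
    have hd02 : u0 ≠ u2 := fun h => Set.disjoint_left.mp
      (hal (by simp : (Sum.inl 0 : S17Agt n m) ≠ Sum.inl 2)) hu0 (by rw [h]; exact hu2)
    have hd12 : u1 ≠ u2 := fun h => Set.disjoint_left.mp
      (hal (by simp : (Sum.inl 1 : S17Agt n m) ≠ Sum.inl 2)) hu1 (by rw [h]; exact hu2)
    have hz : ∃ k : Fin 3, (Sum.inl 0 : S17Itm n m) ∈ π (Sum.inl k) := by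
      rcases S17tripleMem hm0 hm1 hm2 hd01 hd02 hd12 with h | h | h
      · exact ⟨0, by rw [h]; exact hu0⟩
      · exact ⟨1, by rw [h]; exact hu1⟩
      · exact ⟨2, by rw [h]; exact hu2⟩
    obtain ⟨kz, hkz⟩ := hz
    have hzA : ∀ (i : Fin n) (jj : Fin m),
        (Sum.inl 0 : S17Itm n m) ∉ π (Sum.inr (Sum.inl (i, jj))) :=
      fun i jj hmem => Set.disjoint_left.mp
        (hal (by simp : (Sum.inl kz : S17Agt n m) ≠ Sum.inr (Sum.inl (i, jj)))) hkz hmem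
    -- F2 : if a_i^j does not own ℓ_i^j then it owns v_i^{j+1}
    have hF2 : ∀ (i : Fin n) (jj : Fin m),
        Sum.inr (Sum.inr (i, jj, true)) ∉ π (Sum.inr (Sum.inl (i, jj))) →
        Sum.inr (Sum.inl (i, finRotate m jj)) ∈ π (Sum.inr (Sum.inl (i, jj))) := by
      intro i jj hl
      by_contra hv
      have hdk := hd (Sum.inr (Sum.inl (i, jj)))
      unfold dissat at hdk
      refine absurd hdk (not_le.mpr (lt_of_lt_of_le (by norm_num)
        (S17three_le_ncard (Set.toFinite _) (x := (Sum.inl 0 : S17Itm n m))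
          (y := Sum.inr (Sum.inl (i, finRotate m jj))) (w := Sum.inr (Sum.inr (i, jj, true)))
          ?_ ?_ ?_ (by simp) (by simp) (by simp))))
      · refine ⟨by simp [s17Vi], ?_⟩
        rintro ⟨u, hu, -, hdom⟩
        rcases S17domA_inv cl i jj hdom with rfl | rfl | ⟨rfl, hx⟩ | ⟨rfl, hx⟩
        · exact hzA i jj hu
        · exact hzA i jj hu
        · rcases hx with hx | ⟨hx, -⟩ <;> simp at hx
        · exact absurd hx.symm (by simp)
      · refine ⟨by simp [s17Vi], ?_⟩
        rintro ⟨u, hu, -, hdom⟩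
        rcases S17domA_inv cl i jj hdom with rfl | rfl | ⟨rfl, hx⟩ | ⟨rfl, hx⟩
        · exact hv hu
        · exact hzA i jj hu
        · rcases hx with hx | ⟨hx, -⟩ <;> simp at hx
        · exact absurd hx.symm (by simp)
      · refine ⟨by simp [s17Vi], ?_⟩
        rintro ⟨u, hu, -, hdom⟩
        rcases S17domA_inv cl i jj hdom with rfl | rfl | ⟨rfl, hx⟩ | ⟨rfl, hx⟩
        · exact hl hu
        · exact hzA i jj hu
        · exact hv hu
        · exact absurd hx (by simp)
    -- F3 : if a_i^j does not own ℓ̄_i^j then it owns v_i^j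
    have hF3 : ∀ (i : Fin n) (jj : Fin m),
        Sum.inr (Sum.inr (i, jj, false)) ∉ π (Sum.inr (Sum.inl (i, jj))) →
        Sum.inr (Sum.inl (i, jj)) ∈ π (Sum.inr (Sum.inl (i, jj))) := by
      intro i jj hl
      by_contra hv
      have hdk := hd (Sum.inr (Sum.inl (i, jj)))
      unfold dissat at hdk
      refine absurd hdk (not_le.mpr (lt_of_lt_of_le (by norm_num)
        (S17three_le_ncard (Set.toFinite _) (x := (Sum.inl 0 : S17Itm n m))
          (y := Sum.inr (Sum.inl (i, jj))) (w := Sum.inr (Sum.inr (i, jj, false)))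
          ?_ ?_ ?_ (by simp) (by simp) (by simp))))
      · refine ⟨by simp [s17Vi], ?_⟩
        rintro ⟨u, hu, -, hdom⟩
        rcases S17domA_inv cl i jj hdom with rfl | rfl | ⟨rfl, hx⟩ | ⟨rfl, hx⟩
        · exact hzA i jj hu
        · exact hzA i jj hu
        · rcases hx with hx | ⟨hx, -⟩ <;> simp at hx
        · exact absurd hx.symm (by simp)
      · refine ⟨by simp [s17Vi], ?_⟩
        rintro ⟨u, hu, -, hdom⟩
        rcases S17domA_inv cl i jj hdom with rfl | rfl | ⟨rfl, hx⟩ | ⟨rfl, hx⟩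
        · exact hv hu
        · exact hzA i jj hu
        · rcases hx with hx | ⟨hx, -⟩ <;> simp at hx
        · exact absurd hx.symm (by simp)
      · refine ⟨by simp [s17Vi], ?_⟩
        rintro ⟨u, hu, -, hdom⟩
        rcases S17domA_inv cl i jj hdom with rfl | rfl | ⟨rfl, hx⟩ | ⟨rfl, hx⟩
        · exact hl hu
        · exact hzA i jj hu
        · rcases hx with hx | ⟨-, hfix⟩
          · exact absurd hx (by simp)
          · rw [hfix] at hu; exact hv hu
        · exact hv hu
    -- F1 : a_i^j owns v_i^j or v_i^{j+1}
    have hF1 : ∀ (i : Fin n) (jj : Fin m), finRotate m jj ≠ jj →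
        (Sum.inr (Sum.inl (i, jj)) ∈ π (Sum.inr (Sum.inl (i, jj))) ∨
         Sum.inr (Sum.inl (i, finRotate m jj)) ∈ π (Sum.inr (Sum.inl (i, jj)))) := by
      intro i jj hrotne
      by_contra hb
      push_neg at hb
      obtain ⟨hb1, hb2⟩ := hb
      have hdk := hd (Sum.inr (Sum.inl (i, jj)))
      unfold dissat at hdk
      refine absurd hdk (not_le.mpr (lt_of_lt_of_le (by norm_num)
        (S17three_le_ncard (Set.toFinite _) (x := (Sum.inl 0 : S17Itm n m))
          (y := Sum.inr (Sum.inl (i, jj))) (w := Sum.inr (Sum.inl (i, finRotate m jj)))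
          ?_ ?_ ?_ (by simp) (by simp)
          (by simp only [ne_eq, Sum.inr.injEq, Sum.inl.injEq, Prod.mk.injEq, true_and]
              exact fun h => hrotne h.symm))))
      · refine ⟨by simp [s17Vi], ?_⟩
        rintro ⟨u, hu, -, hdom⟩
        rcases S17domA_inv cl i jj hdom with rfl | rfl | ⟨rfl, hx⟩ | ⟨rfl, hx⟩
        · exact hzA i jj hu
        · exact hzA i jj hu
        · rcases hx with hx | ⟨hx, -⟩ <;> simp at hx
        · exact absurd hx.symm (by simp)
      · refine ⟨by simp [s17Vi], ?_⟩
        rintro ⟨u, hu, -, hdom⟩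
        rcases S17domA_inv cl i jj hdom with rfl | rfl | ⟨rfl, hx⟩ | ⟨rfl, hx⟩
        · exact hb1 hu
        · exact hzA i jj hu
        · rcases hx with hx | ⟨hx, -⟩ <;> simp at hx
        · exact absurd hx.symm (by simp)
      · refine ⟨by simp [s17Vi], ?_⟩
        rintro ⟨u, hu, -, hdom⟩
        rcases S17domA_inv cl i jj hdom with rfl | rfl | ⟨rfl, hx⟩ | ⟨rfl, hx⟩
        · exact hb2 hu
        · exact hzA i jj hu
        · rcases hx with hx | ⟨hx, -⟩ <;> simp at hx
        · exact absurd hx.symm (by simp)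
    -- each clause agent owns one of its literal items
    have hcuse : ∀ j : Fin m, ∃ t : Fin 3,
        Sum.inr (Sum.inr ((cl j t).1, j, (cl j t).2)) ∈ π (Sum.inr (Sum.inr j)) := by
      intro j
      by_contra hno
      push_neg at hno
      have hdk := hd (Sum.inr (Sum.inr j))
      unfold dissat at hdk
      have hdne : ∀ t t' : Fin 3, t ≠ t' →
          (Sum.inr (Sum.inr ((cl j t).1, j, (cl j t).2)) : S17Itm n m) ≠
           Sum.inr (Sum.inr ((cl j t').1, j, (cl j t').2)) := by
        intro t t' htt h
        simp only [Sum.inr.injEq, Prod.mk.injEq] at h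
        exact htt (hdist j h.1)
      refine absurd hdk (not_le.mpr (lt_of_lt_of_le (by norm_num)
        (S17three_le_ncard (Set.toFinite _)
          (x := (Sum.inr (Sum.inr ((cl j 0).1, j, (cl j 0).2)) : S17Itm n m))
          (y := Sum.inr (Sum.inr ((cl j 1).1, j, (cl j 1).2)))
          (w := Sum.inr (Sum.inr ((cl j 2).1, j, (cl j 2).2)))
          ?_ ?_ ?_ (hdne 0 1 (by decide)) (hdne 0 2 (by decide)) (hdne 1 2 (by decide)))))
      · refine ⟨⟨0, rfl⟩, ?_⟩
        rintro ⟨u, hu, hVi, -⟩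
        obtain ⟨t', rfl⟩ := hVi
        exact hno t' hu
      · refine ⟨⟨1, rfl⟩, ?_⟩
        rintro ⟨u, hu, hVi, -⟩
        obtain ⟨t', rfl⟩ := hVi
        exact hno t' hu
      · refine ⟨⟨2, rfl⟩, ?_⟩
        rintro ⟨u, hu, hVi, -⟩
        obtain ⟨t', rfl⟩ := hVi
        exact hno t' hu
    -- define the assignment
    refine ⟨fun i => if h : ∃ jj : Fin m, (∃ t, cl jj t = (i, true)) ∧
        Sum.inr (Sum.inr (i, jj, true)) ∈ π (Sum.inr (Sum.inr jj)) then true else false, ?_⟩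
    intro j
    obtain ⟨t, ht⟩ := hcuse j
    refine ⟨t, ?_⟩
    by_cases hs : (cl j t).2 = true
    · rw [hs]
      exact dif_pos ⟨j, ⟨t, Prod.ext rfl hs⟩, by rw [hs] at ht; exact ht⟩
    · rw [Bool.not_eq_true] at hs
      rw [hs]
      refine dif_neg ?_
      rintro ⟨j', ⟨t', ht'⟩, hmem'⟩
      have hjfalse : Sum.inr (Sum.inr ((cl j t).1, j, false)) ∈ π (Sum.inr (Sum.inr j)) := by
        rw [hs] at ht; exact ht
      by_cases hjj : j = j'
      · subst hjj
        have h1 : (cl j t').1 = (cl j t).1 := by rw [ht']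
        have htt : t = t' := hdist j h1.symm
        subst htt
        have h2 : (cl j t).2 = true := by rw [ht']
        rw [hs] at h2
        exact Bool.false_ne_true h2
      · have hm2 : 2 ≤ m := by
          by_contra hc
          push_neg at hc
          have h1 := j.is_lt
          have h2 := j'.is_lt
          exact hjj (Fin.ext (by omega))
        have hl' : Sum.inr (Sum.inr ((cl j t).1, j', true)) ∉
            π (Sum.inr (Sum.inl ((cl j t).1, j'))) :=
          fun hc => Set.disjoint_left.mp (hal (by simp :
            (Sum.inr (Sum.inr j') : S17Agt n m) ≠ Sum.inr (Sum.inl ((cl j t).1, j')))) hmem' hc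
        have hstart := hF2 (cl j t).1 j' hl'
        have hlj : Sum.inr (Sum.inr ((cl j t).1, j, false)) ∉
            π (Sum.inr (Sum.inl ((cl j t).1, j))) :=
          fun hc => Set.disjoint_left.mp (hal (by simp :
            (Sum.inr (Sum.inr j) : S17Agt n m) ≠ Sum.inr (Sum.inl ((cl j t).1, j)))) hjfalse hc
        have hend := hF3 (cl j t).1 j hlj
        haveI : NeZero m := ⟨by omega⟩
        exact S17cycle hm2 π hal (cl j t).1 j j'
          (fun k => hF1 (cl j t).1 k
            (by rw [S17rot]; exact S17succ_ne m hm2 k)) hstart hend
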